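/- Let m be a positive real number and let N be a Poisson random variable with mean m (i.e. P(N = n) = e^{-m} m^n / n! for n ∈ ℕ). Then E[ 1_{[N ≥ 1]} / N² ] ≤ 6 / m², i.e. ∑_{n=1}^{∞} e^{-m} m^n / (n² · n!) ≤ 6 / m². -/

import Mathlib

/-! Since `(n + 2)(n + 1) ≤ 6 n²` for `n ≥ 1`, each term `m ^ n / (n² n!)` is at most
`(6 / m²) · m ^ (n + 2) / (n + 2)!`, and the shifted exponential series is bounded by `exp m`. -/

open Nat Real

theorem Nat.factorial_add_two_le_six_mul_sq_mul_factorial {n : ℕ} (hn : 1 ≤ n) :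
    (n + 2)! ≤ 6 * n ^ 2 * n ! := by
  rw [factorial_succ, factorial_succ, ← mul_assoc]
  exact Nat.mul_le_mul_right _ (by nlinarith)

theorem Real.tsum_pow_add_two_div_factorial_le_exp {x : ℝ} (hx : 0 ≤ x) :
    ∑' n : ℕ, x ^ (n + 2) / (n + 2)! ≤ exp x := by
  rw [exp_eq_exp_ℝ, NormedSpace.exp_eq_tsum_div]
  exact Summable.tsum_le_tsum_of_inj (· + 2) (add_left_injective 2) (fun _ _ ↦ by positivity)
    (fun _ ↦ le_rfl) ((summable_nat_add_iff 2).mpr (summable_pow_div_factorial x))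
    (summable_pow_div_factorial x)

theorem pow_div_sq_mul_factorial_le {m : ℝ} (hm : 0 < m) {n : ℕ} (hn : 1 ≤ n) :
    m ^ n / ((n : ℝ) ^ 2 * n !) ≤ 6 / m ^ 2 * (m ^ (n + 2) / (n + 2)!) := by
  have hfac : ((n + 2)! : ℝ) ≤ 6 * (n : ℝ) ^ 2 * n ! := by
    exact_mod_cast factorial_add_two_le_six_mul_sq_mul_factorial hn
  calc m ^ n / ((n : ℝ) ^ 2 * n !) = 6 * m ^ n / (6 * (n : ℝ) ^ 2 * n !) := by
        rw [mul_assoc, mul_div_mul_left _ _ (by norm_num)]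
    _ ≤ 6 * m ^ n / (n + 2)! := by gcongr
    _ = 6 / m ^ 2 * (m ^ (n + 2) / (n + 2)!) := by field_simp; ring

/-- Poisson moment estimate: if `N` is Poisson with mean `m > 0`, i.e.
`P(N = n) = e^{-m} m^n / n!`, then `E[1_{[N ≥ 1]}/N²] = ∑_{n≥1} e^{-m} m^n/(n² n!) ≤ 6/m²`. -/
theorem stmt0 (m : ℝ) (hm : 0 < m) :
    ∑' n : ℕ, (if 1 ≤ n then Real.exp (-m) * m ^ n / ((n : ℝ) ^ 2 * n.factorial) else 0)
      ≤ 6 / m ^ 2 := by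
  set f : ℕ → ℝ := fun n ↦
    if 1 ≤ n then Real.exp (-m) * m ^ n / ((n : ℝ) ^ 2 * n.factorial) else 0
  set g : ℕ → ℝ := fun n ↦ exp (-m) * (6 / m ^ 2 * (m ^ (n + 2) / (n + 2)!))
  have hf_nonneg : ∀ n, 0 ≤ f n := fun n ↦ by unfold f; split_ifs <;> positivity
  have hfg : ∀ n, f n ≤ g n := fun n ↦ by
    unfold f g
    split_ifs with hn
    · rw [mul_div_assoc]
      exact mul_le_mul_of_nonneg_left (pow_div_sq_mul_factorial_le hm hn) (exp_pos _).le
    · positivity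
  have hg : Summable g :=
    (((summable_nat_add_iff 2).mpr (summable_pow_div_factorial m)).mul_left _).mul_left _
  calc ∑' n, f n ≤ ∑' n, g n := (hg.of_nonneg_of_le hf_nonneg hfg).tsum_le_tsum hfg hg
    _ = exp (-m) * (6 / m ^ 2 * ∑' n : ℕ, m ^ (n + 2) / (n + 2)!) := by
        rw [tsum_mul_left, tsum_mul_left]
    _ ≤ exp (-m) * (6 / m ^ 2 * exp m) := by
        gcongr
        exact tsum_pow_add_two_div_factorial_le_exp hm.le
    _ = 6 / m ^ 2 := by rw [mul_left_comm, ← exp_add, neg_add_cancel, exp_zero, mul_one]
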